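/- Let σ > 0 and let X and Y be independent Gaussian random variables with X ~ N(x̂, σ²) and Y ~ N(ŷ, σ²). Fix η > 0, σn² > 0, d > 0, x₀ ∈ ℝ, R̂ > 0, ε ∈ (0, 1), and set l = √((x̂ − x₀)² + ŷ²). Let r_min > 0 be the unique positive real satisfying Q₁(l/σ, r_min/σ) = ε. Then for every P > 0, the outage probability Pr[ log₂(1 + ηP/(((X − x₀)² + Y² + d²) σn²)) < R̂ ] is at most ε if and only if P ≥ (2^{R̂} − 1)(r_min² + d²) σn² / η. In particular, the minimum transmit power meeting the outage constraint is P_min = (2^{R̂} − 1)(r_min² + d²) σn² / η. -/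

import Mathlib

open MeasureTheory ProbabilityTheory Real

/-- Modified Bessel function of the first kind, order 0 (integral representation). -/
noncomputable def I0 (x : ℝ) : ℝ :=
  (1 / Real.pi) * ∫ θ in (0 : ℝ)..Real.pi, Real.exp (x * Real.cos θ)

/-- First-order Marcum Q-function. -/
noncomputable def marcumQ (a b : ℝ) : ℝ :=
  ∫ x in Set.Ioi b, x * Real.exp (-(x ^ 2 + a ^ 2) / 2) * I0 (a * x)

open Set


lemma I0_continuous : Continuous I0 := by
  have : Continuous fun x : ℝ => ∫ θ in (0:ℝ)..Real.pi, Real.exp (x * Real.cos θ) := by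
    apply intervalIntegral.continuous_parametric_intervalIntegral_of_continuous'
    fun_prop
  exact continuous_const.mul this

lemma I0_pos (x : ℝ) : 0 < I0 x := by
  have h : 0 < ∫ θ in (0:ℝ)..Real.pi, Real.exp (x * Real.cos θ) := by
    apply intervalIntegral.intervalIntegral_pos_of_pos
      (Continuous.intervalIntegrable (by fun_prop) _ _)
      (fun θ => Real.exp_pos _) Real.pi_pos
  have := Real.pi_pos
  have h1 : 0 < (1:ℝ)/Real.pi := by positivity
  unfold I0
  positivity

lemma I0_le_exp {x : ℝ} (hx : 0 ≤ x) : I0 x ≤ Real.exp x := by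
  have h : ∫ θ in (0:ℝ)..Real.pi, Real.exp (x * Real.cos θ) ≤
      ∫ θ in (0:ℝ)..Real.pi, Real.exp x := by
    apply intervalIntegral.integral_mono_on Real.pi_pos.le
      (Continuous.intervalIntegrable (by fun_prop) _ _)
      (Continuous.intervalIntegrable (by fun_prop) _ _)
    intro θ _
    exact Real.exp_le_exp.2 (by nlinarith [Real.cos_le_one θ, Real.neg_one_le_cos θ])
  rw [intervalIntegral.integral_const] at h
  have hπ : 0 < Real.pi := Real.pi_pos
  calc I0 x ≤ (1/Real.pi) * ((Real.pi - 0) • Real.exp x) := by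
        unfold I0; apply mul_le_mul_of_nonneg_left h (by positivity)
    _ = Real.exp x := by rw [sub_zero, smul_eq_mul]; field_simp

lemma integral_exp_cos_symm (c : ℝ) :
    ∫ θ in (-Real.pi)..Real.pi, Real.exp (c * Real.cos θ) = 2 * Real.pi * I0 c := by
  have hint : ∀ a b : ℝ, IntervalIntegrable (fun θ => Real.exp (c * Real.cos θ)) volume a b :=
    fun a b => Continuous.intervalIntegrable (by fun_prop) _ _
  have hsplit := intervalIntegral.integral_add_adjacent_intervals (a := -Real.pi) (b := 0)
    (c := Real.pi) (hint _ _) (hint _ _)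
  have hneg : ∫ θ in (-Real.pi)..(0:ℝ), Real.exp (c * Real.cos θ)
      = ∫ θ in (0:ℝ)..Real.pi, Real.exp (c * Real.cos θ) := by
    have h1 : ∫ θ in (-Real.pi)..(0:ℝ), Real.exp (c * Real.cos θ)
        = ∫ θ in (-Real.pi)..(0:ℝ), Real.exp (c * Real.cos (-θ)) := by
      apply intervalIntegral.integral_congr
      intro x _
      show Real.exp (c * Real.cos x) = Real.exp (c * Real.cos (-x))
      rw [Real.cos_neg]
    rw [h1, intervalIntegral.integral_comp_neg (fun θ => Real.exp (c * Real.cos θ))]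
    norm_num
  have : I0 c = (1/Real.pi) * ∫ θ in (0:ℝ)..Real.pi, Real.exp (c * Real.cos θ) := rfl
  have hπ := Real.pi_pos
  rw [← hsplit, hneg, this]
  field_simp
  ring

lemma integral_exp_cos_sin (c a b : ℝ) (hc : 0 ≤ c) (h : a^2 + b^2 = c^2) :
    ∫ θ in (-Real.pi)..Real.pi, Real.exp (a * Real.cos θ + b * Real.sin θ)
      = 2 * Real.pi * I0 c := by
  obtain ⟨φ, ha, hb⟩ : ∃ φ : ℝ, a = c * Real.cos φ ∧ b = c * Real.sin φ := by
    rcases eq_or_lt_of_le hc with hc0 | hc0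
    · have ha0 : a = 0 := by nlinarith [sq_nonneg a, sq_nonneg b]
      have hb0 : b = 0 := by nlinarith [sq_nonneg a, sq_nonneg b]
      exact ⟨0, by simp [ha0, ← hc0], by simp [hb0, ← hc0]⟩
    · set z : ℂ := ⟨a, b⟩ with hz
      have habs : ‖z‖ = c := by
        rw [Complex.norm_def, Complex.normSq_mk]
        rw [show a * a + b * b = c^2 by nlinarith]
        exact Real.sqrt_sq hc
      have hz0 : z ≠ 0 := by
        intro h0
        rw [h0] at habs; simp at habs; exact hc0.ne habs
      refine ⟨z.arg, ?_, ?_⟩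
      · have := Complex.cos_arg hz0
        rw [habs] at this
        field_simp at this
        simpa [hz, mul_comm] using this.symm
      · have := Complex.sin_arg z
        rw [habs] at this
        field_simp at this
        simpa [hz, mul_comm] using this.symm
  have hcong : ∫ θ in (-Real.pi)..Real.pi, Real.exp (a * Real.cos θ + b * Real.sin θ)
      = ∫ θ in (-Real.pi)..Real.pi, Real.exp (c * Real.cos (θ - φ)) := by
    apply intervalIntegral.integral_congr
    intro x _
    show Real.exp (a * Real.cos x + b * Real.sin x) = Real.exp (c * Real.cos (x - φ))
    rw [Real.cos_sub, ha, hb]; ring_nf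
  rw [hcong, intervalIntegral.integral_comp_sub_right (fun θ => Real.exp (c * Real.cos θ)) φ]
  have hper : Function.Periodic (fun θ => Real.exp (c * Real.cos θ)) (2 * Real.pi) :=
    fun x => by simp [Real.cos_add_two_pi]
  have h2 := hper.intervalIntegral_add_eq (-Real.pi - φ) (-Real.pi)
  have e1 : -Real.pi - φ + 2 * Real.pi = Real.pi - φ := by ring
  have e2 : -Real.pi + 2 * Real.pi = Real.pi := by ring
  rw [e1, e2] at h2
  rw [h2, integral_exp_cos_symm]

lemma lintegral_comp_polarCoord_symm' (f : ℝ × ℝ → ENNReal) :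
    (∫⁻ p in polarCoord.target, ENNReal.ofReal p.1 * f (polarCoord.symm p))
      = ∫⁻ p, f p := by
  set B : ℝ × ℝ → ℝ × ℝ →L[ℝ] ℝ × ℝ := fun p =>
    LinearMap.toContinuousLinearMap (Matrix.toLin (Module.Basis.finTwoProd ℝ) (Module.Basis.finTwoProd ℝ)
      !![Real.cos p.2, -p.1 * Real.sin p.2; Real.sin p.2, p.1 * Real.cos p.2])
  have A : ∀ p ∈ polarCoord.target, HasFDerivWithinAt polarCoord.symm (B p) polarCoord.target p :=
    fun p _ => (hasFDerivAt_polarCoord_symm p).hasFDerivWithinAt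
  have B_det : ∀ p, (B p).det = p.1 := by
    intro p
    conv_rhs => rw [← one_mul p.1, ← Real.cos_sq_add_sin_sq p.2]
    simp only [B, neg_mul, LinearMap.det_toContinuousLinearMap, LinearMap.det_toLin,
      Matrix.det_fin_two_of, sub_neg_eq_add]
    ring
  have hinj : Set.InjOn polarCoord.symm polarCoord.target := polarCoord.symm.injOn
  have himg : polarCoord.symm '' polarCoord.target = polarCoord.source :=
    polarCoord.symm_image_target_eq_source
  symm
  calc
    ∫⁻ p, f p = ∫⁻ p in polarCoord.source, f p := by
      rw [← setLIntegral_univ]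
      exact setLIntegral_congr polarCoord_source_ae_eq_univ.symm
    _ = ∫⁻ p in polarCoord.symm '' polarCoord.target, f p := by rw [himg]
    _ = ∫⁻ p in polarCoord.target, ENNReal.ofReal |(B p).det| * f (polarCoord.symm p) := by
      exact lintegral_image_eq_lintegral_abs_det_fderiv_mul volume
        polarCoord.open_target.measurableSet A hinj f
    _ = ∫⁻ p in polarCoord.target, ENNReal.ofReal p.1 * f (polarCoord.symm p) := by
      apply setLIntegral_congr_fun polarCoord.open_target.measurableSet
      exact fun p hp => by rw [B_det, abs_of_pos hp.1]

lemma integrable_aux {k c : ℝ} (hk : 0 < k) (hc : 0 ≤ c) {B : ℝ} (hB : 0 ≤ B) :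
    IntegrableOn (fun x => x * Real.exp (-k * (x^2 + c^2)) * I0 (2*k*c*x)) (Ioi B) := by
  have hgint : Integrable (fun x : ℝ => (x + c) * Real.exp (-k * x^2)) := by
    have h1 := integrable_mul_exp_neg_mul_sq hk
    have h2 := (integrable_exp_neg_mul_sq hk).const_mul c
    have := h1.add h2
    refine this.congr ?_
    refine Filter.Eventually.of_forall fun x => ?_
    simp; ring
  have hgint2 : Integrable (fun x : ℝ => (x - c + c) * Real.exp (-k * (x - c)^2)) :=
    hgint.comp_sub_right c
  apply Integrable.mono (hgint2.restrict (s := Ioi B))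
  · apply Continuous.aestronglyMeasurable
    have := I0_continuous
    fun_prop
  · refine (ae_restrict_iff' measurableSet_Ioi).2 (Filter.Eventually.of_forall fun x hx => ?_)
    have hx0 : 0 < x := lt_of_le_of_lt hB hx
    have harg : 0 ≤ 2*k*c*x := by positivity
    have hb1 : I0 (2*k*c*x) ≤ Real.exp (2*k*c*x) := I0_le_exp harg
    have hI0 : 0 < I0 (2*k*c*x) := I0_pos _
    rw [Real.norm_eq_abs, Real.norm_eq_abs, abs_of_nonneg (by positivity), sub_add_cancel]
    have key : x * Real.exp (-k * (x^2+c^2)) * I0 (2*k*c*x)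
        ≤ x * Real.exp (-k * (x^2+c^2)) * Real.exp (2*k*c*x) := by
      apply mul_le_mul_of_nonneg_left hb1 (by positivity)
    refine le_trans key (le_trans (le_of_eq ?_) (le_abs_self _))
    rw [mul_assoc, ← Real.exp_add]
    congr 2
    ring

lemma radial_eq_marcum (σ l r : ℝ) (hσ : 0 < σ) (hl : 0 ≤ l) (hr : 0 < r) :
    ∫ ρ in Ioi r, ρ * ((2*Real.pi*σ^2)⁻¹ * Real.exp (-(ρ^2+l^2)/(2*σ^2))
        * (2*Real.pi*I0 (l*ρ/σ^2)))
      = marcumQ (l/σ) (r/σ) := by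
  have h := integral_comp_mul_left_Ioi
    (fun ρ => ρ * ((2*Real.pi*σ^2)⁻¹ * Real.exp (-(ρ^2+l^2)/(2*σ^2)) * (2*Real.pi*I0 (l*ρ/σ^2))))
    (r/σ) hσ
  rw [mul_div_cancel₀ _ hσ.ne'] at h
  have h2 : ∫ x in Ioi (r/σ),
      (σ*x) * ((2*Real.pi*σ^2)⁻¹ * Real.exp (-((σ*x)^2+l^2)/(2*σ^2)) * (2*Real.pi*I0 (l*(σ*x)/σ^2)))
      = σ⁻¹ * marcumQ (l/σ) (r/σ) := by
    rw [marcumQ, ← integral_const_mul]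
    apply setIntegral_congr_fun measurableSet_Ioi
    intro x _
    show σ * x * ((2*Real.pi*σ^2)⁻¹ * Real.exp (-((σ*x)^2+l^2)/(2*σ^2))
        * (2*Real.pi*I0 (l*(σ*x)/σ^2)))
      = σ⁻¹ * (x * Real.exp (-(x^2+(l/σ)^2)/2) * I0 (l/σ*x))
    have hπ := Real.pi_pos
    have e1 : l*(σ*x)/σ^2 = l/σ*x := by field_simp
    have e2 : -((σ*x)^2+l^2)/(2*σ^2) = -(x^2+(l/σ)^2)/2 := by field_simp
    rw [e1, e2]
    field_simp
  rw [h2] at h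
  have hσ' : σ⁻¹ ≠ 0 := inv_ne_zero hσ.ne'
  have := h.symm
  rw [smul_eq_mul] at this
  exact mul_left_cancel₀ hσ' this

lemma inner_theta (σ a b l ρ : ℝ) (hσ : 0 < σ) (hρ : 0 < ρ)
    (hl : l = Real.sqrt (a^2+b^2)) :
    ∫⁻ θ in Ioo (-Real.pi) Real.pi,
      ENNReal.ofReal (ρ * (gaussianPDFReal a ⟨σ^2, sq_nonneg σ⟩ (ρ * Real.cos θ)
        * gaussianPDFReal b ⟨σ^2, sq_nonneg σ⟩ (ρ * Real.sin θ)))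
    = ENNReal.ofReal (ρ * ((2*Real.pi*σ^2)⁻¹ * Real.exp (-(ρ^2+l^2)/(2*σ^2))
        * (2*Real.pi*I0 (l*ρ/σ^2)))) := by
  have hπ := Real.pi_pos
  have hl0 : 0 ≤ l := by rw [hl]; exact Real.sqrt_nonneg _
  have hl2 : l^2 = a^2 + b^2 := by rw [hl]; exact Real.sq_sqrt (by positivity)
  set C : ℝ := ρ * (2*Real.pi*σ^2)⁻¹ * Real.exp (-(ρ^2+l^2)/(2*σ^2)) with hC
  set a' : ℝ := a*ρ/σ^2
  set b' : ℝ := b*ρ/σ^2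
  have hptwise : ∀ θ : ℝ, ρ * (gaussianPDFReal a ⟨σ^2, sq_nonneg σ⟩ (ρ * Real.cos θ)
      * gaussianPDFReal b ⟨σ^2, sq_nonneg σ⟩ (ρ * Real.sin θ))
      = C * Real.exp (a' * Real.cos θ + b' * Real.sin θ) := by
    intro θ
    have hsc := Real.sin_sq_add_cos_sq θ
    unfold gaussianPDFReal
    have hss : Real.sqrt (2*Real.pi*σ^2) * Real.sqrt (2*Real.pi*σ^2) = 2*Real.pi*σ^2 :=
      Real.mul_self_sqrt (by positivity)
    have hexp : -(ρ * Real.cos θ - a)^2/(2*σ^2) + -(ρ * Real.sin θ - b)^2/(2*σ^2)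
        = -(ρ^2+l^2)/(2*σ^2) + (a' * Real.cos θ + b' * Real.sin θ) := by
      have key : -(ρ*Real.cos θ - a)^2 + -(ρ*Real.sin θ - b)^2
          = -(ρ^2+l^2) + 2*(a*ρ*Real.cos θ + b*ρ*Real.sin θ) := by
        linear_combination (-(ρ^2))*hsc + hl2
      rw [← add_div, key, add_div]
      congr 1
      show 2*(a*ρ*Real.cos θ + b*ρ*Real.sin θ) / (2*σ^2) = a*ρ/σ^2 * Real.cos θ + b*ρ/σ^2 * Real.sin θ
      field_simp
    calc ρ * ((Real.sqrt (2*Real.pi*σ^2))⁻¹ * Real.exp (-(ρ * Real.cos θ - a)^2/(2*σ^2))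
          * ((Real.sqrt (2*Real.pi*σ^2))⁻¹ * Real.exp (-(ρ * Real.sin θ - b)^2/(2*σ^2))))
        = ρ * ((Real.sqrt (2*Real.pi*σ^2) * Real.sqrt (2*Real.pi*σ^2))⁻¹
            * Real.exp (-(ρ * Real.cos θ - a)^2/(2*σ^2) + -(ρ * Real.sin θ - b)^2/(2*σ^2))) := by
          rw [Real.exp_add, mul_inv]; ring
      _ = C * Real.exp (a' * Real.cos θ + b' * Real.sin θ) := by
          rw [hss, hexp, Real.exp_add, hC]; ring
  simp only [hptwise]
  have hcont : Continuous fun θ : ℝ => C * Real.exp (a' * Real.cos θ + b' * Real.sin θ) := by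
    fun_prop
  have hInt : IntegrableOn (fun θ : ℝ => C * Real.exp (a' * Real.cos θ + b' * Real.sin θ))
      (Ioo (-Real.pi) Real.pi) := by
    have := hcont.intervalIntegrable (μ := volume) (-Real.pi) Real.pi
    rw [intervalIntegrable_iff_integrableOn_Ioo_of_le (by linarith)] at this
    exact this
  have hCpos : 0 < C := by
    have := Real.exp_pos (-(ρ^2+l^2)/(2*σ^2)); rw [hC]; positivity
  rw [← ofReal_integral_eq_lintegral_ofReal hInt
    (Filter.Eventually.of_forall fun θ => by positivity)]
  congr 1
  rw [← integral_Ioc_eq_integral_Ioo,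
    ← intervalIntegral.integral_of_le (by linarith : -Real.pi ≤ Real.pi),
    intervalIntegral.integral_const_mul, integral_exp_cos_sin (l*ρ/σ^2) a' b'
      (by positivity) ?_]
  · ring
  · show (a*ρ/σ^2)^2 + (b*ρ/σ^2)^2 = (l*ρ/σ^2)^2
    have : (l*ρ/σ^2)^2 = (a^2+b^2)*ρ^2/(σ^2)^2 := by rw [div_pow, mul_pow, hl2]
    rw [this]; ring

lemma key_measure (σ : ℝ) (hσ : 0 < σ) (a b r : ℝ) (hr : 0 < r) :
    ((gaussianReal a ⟨σ^2, sq_nonneg σ⟩).prod (gaussianReal b ⟨σ^2, sq_nonneg σ⟩))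
      {p : ℝ × ℝ | r^2 < p.1^2 + p.2^2}
    = ENNReal.ofReal (marcumQ (Real.sqrt (a^2+b^2) / σ) (r / σ)) := by
  have hπ := Real.pi_pos
  set v : NNReal := ⟨σ^2, sq_nonneg σ⟩ with hvdef
  have hv : v ≠ 0 := by
    intro h
    have : (v : ℝ) = 0 := by rw [h]; simp
    rw [hvdef] at this
    change σ^2 = 0 at this
    nlinarith
  set l : ℝ := Real.sqrt (a^2+b^2) with hl
  have hl0 : 0 ≤ l := Real.sqrt_nonneg _
  set S : Set (ℝ × ℝ) := {p : ℝ × ℝ | r^2 < p.1^2 + p.2^2} with hSdef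
  have hS : MeasurableSet S := by
    apply measurableSet_lt measurable_const
    fun_prop
  set F : ℝ × ℝ → ENNReal :=
    S.indicator (fun p => gaussianPDF a v p.1 * gaussianPDF b v p.2) with hFdef
  have hFmeas : Measurable F := by
    apply Measurable.indicator _ hS
    exact ((measurable_gaussianPDF a v).comp measurable_fst).mul
      ((measurable_gaussianPDF b v).comp measurable_snd)
  -- Step 1: measure as double lintegral of density
  have step1 : ((gaussianReal a v).prod (gaussianReal b v)) S = ∫⁻ p, F p := by
    rw [Measure.prod_apply hS]
    have hsec : ∀ x : ℝ, (gaussianReal b v) (Prod.mk x ⁻¹' S)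
        = ∫⁻ y, ({y : ℝ | r^2 < x^2 + y^2}.indicator (gaussianPDF b v)) y := by
      intro x
      have hpre : Prod.mk x ⁻¹' S = {y : ℝ | r^2 < x^2 + y^2} := rfl
      have hms : MeasurableSet {y : ℝ | r^2 < x^2 + y^2} := by
        apply measurableSet_lt measurable_const; fun_prop
      rw [hpre, gaussianReal_apply b hv _, ← lintegral_indicator hms]
    simp only [hsec]
    have hgmeas : Measurable fun x : ℝ =>
        ∫⁻ y, ({y : ℝ | r^2 < x^2 + y^2}.indicator (gaussianPDF b v)) y := by
      have : Measurable fun q : ℝ × ℝ =>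
          ({y : ℝ | r^2 < q.1^2 + y^2}.indicator (gaussianPDF b v)) q.2 := by
        have : (fun q : ℝ × ℝ => ({y : ℝ | r^2 < q.1^2 + y^2}.indicator (gaussianPDF b v)) q.2)
            = {q : ℝ × ℝ | r^2 < q.1^2 + q.2^2}.indicator
              (fun q => gaussianPDF b v q.2) := by
          ext q
          by_cases hq : r^2 < q.1^2 + q.2^2 <;>
            simp [Set.indicator, hq]
        rw [this]
        apply Measurable.indicator ((measurable_gaussianPDF b v).comp measurable_snd) hS
      exact this.lintegral_prod_right'
    rw [gaussianReal_of_var_ne_zero a hv,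
      lintegral_withDensity_eq_lintegral_mul volume (measurable_gaussianPDF a v) hgmeas]
    rw [Measure.volume_eq_prod, lintegral_prod _ hFmeas.aemeasurable]
    congr 1
    ext x
    simp only [Pi.mul_apply]
    rw [← lintegral_const_mul _ (by
      apply Measurable.indicator (measurable_gaussianPDF b v)
      apply measurableSet_lt measurable_const; fun_prop)]
    congr 1
    ext y
    by_cases hxy : r^2 < x^2 + y^2
    · have : (x, y) ∈ S := hxy
      simp [Set.indicator, hxy, this, hFdef]
    · have : (x, y) ∉ S := hxy
      simp [Set.indicator, hxy, this, hFdef]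
  -- Step 2: polar coordinates
  rw [step1, ← lintegral_comp_polarCoord_symm' F]
  have htarget : polarCoord.target = Ioi (0:ℝ) ×ˢ Ioo (-Real.pi) Real.pi := rfl
  rw [htarget, Measure.volume_eq_prod, ← Measure.prod_restrict]
  have hmeas2 : Measurable fun p : ℝ × ℝ => ENNReal.ofReal p.1 * F (polarCoord.symm p) := by
    apply Measurable.mul
    · fun_prop
    · have hc : Continuous (fun p : ℝ × ℝ =>
          ((p.1 * Real.cos p.2, p.1 * Real.sin p.2) : ℝ × ℝ)) := by fun_prop
      have heq : (fun p : ℝ × ℝ => F (polarCoord.symm p))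
          = fun p : ℝ × ℝ => F (p.1 * Real.cos p.2, p.1 * Real.sin p.2) := rfl
      rw [heq]
      exact hFmeas.comp hc.measurable
  rw [lintegral_prod _ hmeas2.aemeasurable]
  -- Step 3: inner integral
  set G : ℝ → ℝ := fun ρ => ρ * ((2*Real.pi*σ^2)⁻¹ * Real.exp (-(ρ^2+l^2)/(2*σ^2))
      * (2*Real.pi*I0 (l*ρ/σ^2))) with hGdef
  have step3 : ∫⁻ ρ in Ioi (0:ℝ), ∫⁻ θ in Ioo (-Real.pi) Real.pi,
        ENNReal.ofReal (ρ, θ).1 * F (polarCoord.symm (ρ, θ))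
      = ∫⁻ ρ in Ioi (0:ℝ), (Ioi r).indicator (fun ρ => ENNReal.ofReal (G ρ)) ρ := by
    apply setLIntegral_congr_fun measurableSet_Ioi
    refine fun ρ hρ => ?_
    have hρ0 : 0 < ρ := hρ
    have hsymm : ∀ θ : ℝ, polarCoord.symm (ρ, θ) = (ρ * Real.cos θ, ρ * Real.sin θ) := by
      intro θ; rfl
    have hnorm : ∀ θ : ℝ, (ρ * Real.cos θ)^2 + (ρ * Real.sin θ)^2 = ρ^2 := by
      intro θ
      have := Real.sin_sq_add_cos_sq θ
      nlinarith
    by_cases hρr : r < ρ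
    · have hmem : ∀ θ : ℝ, (ρ * Real.cos θ, ρ * Real.sin θ) ∈ S := by
        intro θ
        show r^2 < (ρ * Real.cos θ)^2 + (ρ * Real.sin θ)^2
        rw [hnorm]
        nlinarith
      have heq : ∀ θ : ℝ, ENNReal.ofReal (ρ, θ).1 * F (polarCoord.symm (ρ, θ))
          = ENNReal.ofReal (ρ * (gaussianPDFReal a v (ρ * Real.cos θ)
            * gaussianPDFReal b v (ρ * Real.sin θ))) := by
        intro θ
        rw [hsymm θ, hFdef]
        rw [Set.indicator_of_mem (hmem θ)]
        rw [gaussianPDF_def, gaussianPDF_def]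
        rw [← ENNReal.ofReal_mul (gaussianPDFReal_nonneg _ _ _),
          ← ENNReal.ofReal_mul hρ0.le]
      simp only [heq]
      rw [inner_theta σ a b l ρ hσ hρ0 hl]
      rw [Set.indicator_of_mem (Set.mem_Ioi.mpr hρr) (fun ρ => ENNReal.ofReal (G ρ))]
    · have hnotmem : ∀ θ : ℝ, (ρ * Real.cos θ, ρ * Real.sin θ) ∉ S := by
        intro θ
        show ¬ (r^2 < (ρ * Real.cos θ)^2 + (ρ * Real.sin θ)^2)
        rw [hnorm]
        push_neg at hρr ⊢
        nlinarith
      have heq : ∀ θ : ℝ, ENNReal.ofReal (ρ, θ).1 * F (polarCoord.symm (ρ, θ)) = 0 := by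
        intro θ
        rw [hsymm θ, hFdef, Set.indicator_of_notMem (hnotmem θ), mul_zero]
      simp only [heq]
      rw [lintegral_zero, Set.indicator_of_notMem (fun h => hρr (Set.mem_Ioi.mp h))]
  rw [step3]
  -- Step 4: collapse indicator
  rw [lintegral_indicator measurableSet_Ioi, Measure.restrict_restrict measurableSet_Ioi,
    Set.Ioi_inter_Ioi, max_eq_left hr.le]
  -- Step 5: to Bochner integral and Marcum Q
  have hGint : IntegrableOn G (Ioi r) := by
    have hk : (0:ℝ) < (2*σ^2)⁻¹ := by positivity
    have base := (integrable_aux hk hl0 hr.le).const_mul ((2*Real.pi*σ^2)⁻¹ * (2*Real.pi))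
    apply base.congr
    refine Filter.Eventually.of_forall fun ρ => ?_
    have e1 : -(2*σ^2)⁻¹ * (ρ^2 + l^2) = -(ρ^2+l^2)/(2*σ^2) := by field_simp
    have e2 : 2*(2*σ^2)⁻¹*l*ρ = l*ρ/σ^2 := by field_simp
    rw [hGdef]
    simp only []
    rw [e1, e2]
    ring
  rw [← ofReal_integral_eq_lintegral_ofReal hGint (by
    refine (ae_restrict_iff' measurableSet_Ioi).2 (Filter.Eventually.of_forall fun ρ hρ => ?_)
    have : 0 < ρ := lt_trans hr hρ
    have := I0_pos (l*ρ/σ^2)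
    have := Real.exp_pos (-(ρ^2+l^2)/(2*σ^2))
    rw [hGdef]
    positivity)]
  rw [radial_eq_marcum σ l r hσ hl0 hr]

theorem stmt_15 {Ω : Type*} [MeasureSpace Ω] [IsProbabilityMeasure (ℙ : Measure Ω)]
    (σ xhat yhat : ℝ) (hσ : 0 < σ)
    (X Y : Ω → ℝ) (hXY : IndepFun X Y ℙ)
    (hX : Measure.map X ℙ = gaussianReal xhat ⟨σ ^ 2, sq_nonneg σ⟩)
    (hY : Measure.map Y ℙ = gaussianReal yhat ⟨σ ^ 2, sq_nonneg σ⟩)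
    (η σn2 d x₀ Rhat ε : ℝ)
    (hη : 0 < η) (hσn : 0 < σn2) (hd : 0 < d) (hR : 0 < Rhat)
    (hε₀ : 0 < ε) (hε₁ : ε < 1)
    (rmin : ℝ) (hrmin : 0 < rmin)
    (hrminQ : marcumQ (Real.sqrt ((xhat - x₀) ^ 2 + yhat ^ 2) / σ) (rmin / σ) = ε)
    (hrmin_unique : ∀ r : ℝ, 0 < r →
      marcumQ (Real.sqrt ((xhat - x₀) ^ 2 + yhat ^ 2) / σ) (r / σ) = ε → r = rmin)
    (P : ℝ) (hP : 0 < P) :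
    (ℙ {ω | Real.logb 2
        (1 + η * P / ((((X ω) - x₀) ^ 2 + (Y ω) ^ 2 + d ^ 2) * σn2)) < Rhat}).toReal ≤ ε
      ↔ P ≥ ((2 : ℝ) ^ Rhat - 1) * (rmin ^ 2 + d ^ 2) * σn2 / η := by
  -- measurability of X and Y
  have hXm : AEMeasurable X ℙ := by
    by_contra h
    rw [Measure.map_of_not_aemeasurable h] at hX
    exact (@IsProbabilityMeasure.ne_zero _ _ _ (instIsProbabilityMeasureGaussianReal xhat _)) hX.symm
  have hYm : AEMeasurable Y ℙ := by
    by_contra h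
    rw [Measure.map_of_not_aemeasurable h] at hY
    exact (@IsProbabilityMeasure.ne_zero _ _ _ (instIsProbabilityMeasureGaussianReal yhat _)) hY.symm
  -- the shifted variable U
  set U : Ω → ℝ := fun ω => X ω - x₀ with hUdef
  have hUm : AEMeasurable U ℙ := hXm.sub aemeasurable_const
  have hU : Measure.map U ℙ = gaussianReal (xhat - x₀) ⟨σ^2, sq_nonneg σ⟩ := by
    have hcomp : U = (fun x => x + (-x₀)) ∘ X := by
      funext ω; simp [hUdef, sub_eq_add_neg]
    rw [hcomp, ← AEMeasurable.map_map_of_aemeasurable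
      ((measurable_add_const (-x₀)).aemeasurable) hXm, hX]
    erw [gaussianReal_map_add_const]
    rw [show xhat + -x₀ = xhat - x₀ from by ring]
  have hUY : IndepFun U Y ℙ := hXY.comp (measurable_id.sub_const x₀) measurable_id
  have hmap : Measure.map (fun ω => (U ω, Y ω)) ℙ
      = (gaussianReal (xhat - x₀) ⟨σ^2, sq_nonneg σ⟩).prod (gaussianReal yhat ⟨σ^2, sq_nonneg σ⟩) := by
    rw [← hU, ← hY]
    exact (indepFun_iff_map_prod_eq_prod_map_map hUm hYm).1 hUY
  -- probability of threshold events
  have hprob : ∀ t : ℝ, ℙ {ω | t < (X ω - x₀)^2 + (Y ω)^2}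
      = ((gaussianReal (xhat - x₀) ⟨σ^2, sq_nonneg σ⟩).prod
          (gaussianReal yhat ⟨σ^2, sq_nonneg σ⟩)) {p : ℝ × ℝ | t < p.1^2 + p.2^2} := by
    intro t
    have hset : MeasurableSet {p : ℝ × ℝ | t < p.1^2 + p.2^2} := by
      apply measurableSet_lt measurable_const; fun_prop
    rw [← hmap, Measure.map_apply_of_aemeasurable (hUm.prodMk hYm) hset]
    rfl
  set l : ℝ := Real.sqrt ((xhat - x₀)^2 + yhat^2) with hldef
  have hval : ∀ r : ℝ, 0 < r → ℙ {ω | r^2 < (X ω - x₀)^2 + (Y ω)^2}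
      = ENNReal.ofReal (marcumQ (l / σ) (r / σ)) := by
    intro r hr
    rw [hprob (r^2), key_measure σ hσ (xhat - x₀) yhat r hr]
  have hmono : ∀ s t : ℝ, s ≤ t →
      ℙ {ω | t < (X ω - x₀)^2 + (Y ω)^2} ≤ ℙ {ω | s < (X ω - x₀)^2 + (Y ω)^2} :=
    fun s t h => measure_mono (fun ω hω => lt_of_le_of_lt h hω)
  -- rewrite the outage event
  have h2R : (1:ℝ) < (2:ℝ) ^ Rhat :=
    (Real.one_lt_rpow_iff_of_pos (by norm_num)).2 (Or.inl ⟨one_lt_two, hR⟩)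
  have hden : (0:ℝ) < ((2:ℝ) ^ Rhat - 1) * σn2 := by
    have := h2R; nlinarith
  obtain ⟨s, hsdef⟩ : ∃ s : ℝ, s = η * P / (((2:ℝ) ^ Rhat - 1) * σn2) - d^2 := ⟨_, rfl⟩
  have hevent : {ω | Real.logb 2
        (1 + η * P / ((((X ω) - x₀) ^ 2 + (Y ω) ^ 2 + d ^ 2) * σn2)) < Rhat}
      = {ω | s < (X ω - x₀)^2 + (Y ω)^2} := by
    ext ω
    simp only [Set.mem_setOf_eq]
    set T : ℝ := (X ω - x₀)^2 + (Y ω)^2 with hTdef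
    have hT0 : 0 ≤ T := by positivity
    have hA : 0 < (T + d^2) * σn2 := by positivity
    have harg : 0 < 1 + η * P / ((T + d^2) * σn2) := by positivity
    rw [show (X ω - x₀)^2 + (Y ω)^2 + d^2 = T + d^2 from rfl]
    rw [Real.logb_lt_iff_lt_rpow one_lt_two harg]
    rw [show (1:ℝ) + η * P / ((T + d^2) * σn2) < 2 ^ Rhat
        ↔ η * P / ((T + d^2) * σn2) < 2 ^ Rhat - 1 from ⟨fun h => by linarith, fun h => by linarith⟩]
    rw [div_lt_iff₀ hA]
    constructor
    · intro h
      rw [hsdef, sub_lt_iff_lt_add, div_lt_iff₀ hden]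
      nlinarith
    · intro h
      rw [hsdef, sub_lt_iff_lt_add, div_lt_iff₀ hden] at h
      nlinarith
  -- the power inequality
  have hPiff : P ≥ ((2:ℝ) ^ Rhat - 1) * (rmin ^ 2 + d ^ 2) * σn2 / η ↔ rmin^2 ≤ s := by
    rw [ge_iff_le, div_le_iff₀ hη, hsdef, le_sub_iff_add_le, le_div_iff₀ hden]
    constructor <;> intro h <;> nlinarith
  rw [hevent]
  constructor
  · -- forward
    intro hle
    by_contra hPlt
    have hsr : s < rmin^2 := by
      by_contra h
      exact hPlt (hPiff.2 (not_lt.1 h))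
    have hmax : max s 0 < rmin^2 := max_lt hsr (by positivity)
    obtain ⟨r', hr'def⟩ : ∃ r' : ℝ, r' = Real.sqrt ((max s 0 + rmin^2)/2) := ⟨_, rfl⟩
    have hhalf : 0 < (max s 0 + rmin^2)/2 := by
      have : (0:ℝ) ≤ max s 0 := le_max_right _ _
      nlinarith
    have hr'sq : r'^2 = (max s 0 + rmin^2)/2 := by rw [hr'def]; exact Real.sq_sqrt hhalf.le
    have hr'pos : 0 < r' := by rw [hr'def]; exact Real.sqrt_pos.2 hhalf
    have hsr' : s < r'^2 := by
      have := le_max_left s 0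
      rw [hr'sq]; linarith
    have hr'lt : r'^2 < rmin^2 := by rw [hr'sq]; linarith
    obtain ⟨q, hqdef⟩ : ∃ q : ℝ, q = marcumQ (l / σ) (r' / σ) := ⟨_, rfl⟩
    have hle1 : ENNReal.ofReal ε ≤ ENNReal.ofReal q := by
      rw [← hrminQ, hqdef, ← hval rmin hrmin, ← hval r' hr'pos]
      exact hmono _ _ hr'lt.le
    have hq0 : 0 < q := by
      by_contra h
      push_neg at h
      rw [ENNReal.ofReal_eq_zero.2 h] at hle1
      simp only [le_zero_iff, ENNReal.ofReal_eq_zero] at hle1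
      linarith
    have hεq : ε ≤ q := (ENNReal.ofReal_le_ofReal_iff hq0.le).1 hle1
    have hqne : q ≠ ε := by
      intro h
      have := hrmin_unique r' hr'pos (hqdef.symm.trans h)
      rw [this] at hr'lt
      exact lt_irrefl _ hr'lt
    have hεlt : ε < q := lt_of_le_of_ne hεq (Ne.symm hqne)
    have hup : ENNReal.ofReal q ≤ ℙ {ω | s < (X ω - x₀)^2 + (Y ω)^2} := by
      rw [hqdef, ← hval r' hr'pos]
      exact hmono _ _ hsr'.le
    have : q ≤ (ℙ {ω | s < (X ω - x₀)^2 + (Y ω)^2}).toReal := by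
      have h1 := ENNReal.toReal_mono (measure_ne_top ℙ _) hup
      rwa [ENNReal.toReal_ofReal hq0.le] at h1
    linarith
  · -- backward
    intro hge
    have hsr : rmin^2 ≤ s := hPiff.1 hge
    have h1 : ℙ {ω | s < (X ω - x₀)^2 + (Y ω)^2} ≤ ENNReal.ofReal ε := by
      rw [← hrminQ, ← hval rmin hrmin]
      exact hmono _ _ hsr
    have h2 := ENNReal.toReal_mono ENNReal.ofReal_ne_top h1
    rwa [ENNReal.toReal_ofReal hε₀.le] at h2
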